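/- For every n ≥ 1, full-rank lattice L ⊆ ℝⁿ, s > 0, and x ∈ ℝⁿ, if λ₁(L) ≥ 4√n · s, then 1 − ρ_s(L − x)/ρ_s(L) ≥ 1 − exp(−π·dist(x, L)²/s²) − 2^{−11n}. -/
import Mathlib

set_option maxHeartbeats 1000000

open Metric Submodule
noncomputable section

lemma hasSum_int_pow_natAbs {r : ℝ} (h0 : 0 ≤ r) (h1 : r < 1) :
    HasSum (fun k : ℤ => r ^ k.natAbs) ((1 - r)⁻¹ + r * (1 - r)⁻¹) := by
  have hf : HasSum (fun m : ℕ => r ^ m) (1 - r)⁻¹ := hasSum_geometric_of_lt_one h0 h1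
  have hg : HasSum (fun m : ℕ => r ^ (m + 1)) (r * (1 - r)⁻¹) := by
    have := hf.mul_left r
    refine this.congr_fun fun m => ?_
    rw [pow_succ]; ring
  have h := hf.int_rec hg
  refine h.congr_fun fun k => ?_
  cases k with
  | ofNat m => rfl
  | negSucc m => rfl

lemma hasSum_pi_prod {h : ℤ → ℝ} {T : ℝ} (h0 : ∀ k, 0 ≤ h k) (hT : HasSum h T) :
    ∀ n : ℕ, HasSum (fun z : Fin n → ℤ => ∏ i, h (z i)) (T ^ n) := by
  intro n
  induction n with
  | zero =>
    have : HasSum (fun z : Fin 0 → ℤ => ∏ i, h (z i)) ((fun z : Fin 0 → ℤ => ∏ i, h (z i)) default) :=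
      hasSum_single default (fun b hb => absurd (Subsingleton.elim b default) hb)
    simpa using this
  | succ n ih =>
    have hG0 : ∀ w : Fin n → ℤ, 0 ≤ ∏ i, h (w i) :=
      fun w => Finset.prod_nonneg fun i _ => h0 _
    have hsum : Summable (fun kw : ℤ × (Fin n → ℤ) => h kw.1 * ∏ i, h (kw.2 i)) :=
      Summable.mul_of_nonneg (f := h) (g := fun w : Fin n → ℤ => ∏ i, h (w i))
        hT.summable ih.summable (Pi.le_def.mpr h0) (Pi.le_def.mpr hG0)
    have htsum : ∑' kw : ℤ × (Fin n → ℤ), h kw.1 * ∏ i, h (kw.2 i) = T ^ (n + 1) := by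
      rw [Summable.tsum_prod hsum]
      have : ∀ k : ℤ, ∑' w : Fin n → ℤ, h k * ∏ i, h (w i) = h k * T ^ n := by
        intro k
        rw [tsum_mul_left, ih.tsum_eq]
      simp_rw [this]
      rw [tsum_mul_right, hT.tsum_eq, pow_succ]; ring
    have hprod : HasSum (fun kw : ℤ × (Fin n → ℤ) => h kw.1 * ∏ i, h (kw.2 i)) (T ^ (n + 1)) := by
      rw [← htsum]; exact hsum.hasSum
    rw [← (Fin.consEquiv (fun _ : Fin (n + 1) => ℤ)).hasSum_iff]
    refine hprod.congr_fun fun kw => ?_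
    have he : (Fin.consEquiv (fun _ : Fin (n + 1) => ℤ)) kw = Fin.cons kw.1 kw.2 := rfl
    simp only [Function.comp_apply, he, Fin.prod_univ_succ, Fin.cons_zero, Fin.cons_succ]

lemma norm_le_of_coords {n : ℕ} (y : EuclideanSpace ℝ (Fin n)) {b : ℝ} (hb : 0 ≤ b)
    (h : ∀ i, |y i| ≤ b) : ‖y‖ ≤ b * Real.sqrt n := by
  rw [EuclideanSpace.norm_eq]
  have h1 : ∑ i, ‖y i‖ ^ 2 ≤ ∑ _i : Fin n, b ^ 2 := by
    refine Finset.sum_le_sum fun i _ => ?_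
    rw [Real.norm_eq_abs]
    exact pow_le_pow_left₀ (abs_nonneg _) (h i) 2
  calc Real.sqrt (∑ i, ‖y i‖ ^ 2) ≤ Real.sqrt ((n : ℝ) * b ^ 2) := by
        refine Real.sqrt_le_sqrt ?_
        simpa using h1
    _ = b * Real.sqrt n := by
        rw [Real.sqrt_mul (Nat.cast_nonneg n), Real.sqrt_sq hb]; ring

def grid (n : ℕ) (s : ℝ) (z : Fin n → ℤ) : EuclideanSpace ℝ (Fin n) :=
  (WithLp.equiv 2 (Fin n → ℝ)).symm (fun i => 2 * s * (z i : ℝ))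

lemma grid_apply {n : ℕ} {s : ℝ} {z : Fin n → ℤ} (i : Fin n) :
    grid n s z i = 2 * s * (z i : ℝ) := rfl

lemma norm_grid {n : ℕ} {s : ℝ} (hs : 0 < s) (z : Fin n → ℤ) :
    ‖grid n s z‖ = 2 * s * Real.sqrt (∑ i, ((z i : ℝ)) ^ 2) := by
  rw [EuclideanSpace.norm_eq]
  have h1 : ∀ i : Fin n, ‖grid n s z i‖ ^ 2 = (2 * s) ^ 2 * ((z i : ℝ)) ^ 2 := by
    intro i
    rw [grid_apply, Real.norm_eq_abs, sq_abs]
    ring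
  calc Real.sqrt (∑ i, ‖grid n s z i‖ ^ 2)
      = Real.sqrt ((2 * s) ^ 2 * ∑ i, ((z i : ℝ)) ^ 2) := by
        congr 1
        rw [Finset.mul_sum]
        exact Finset.sum_congr rfl fun i _ => h1 i
    _ = 2 * s * Real.sqrt (∑ i, ((z i : ℝ)) ^ 2) := by
        rw [Real.sqrt_mul (sq_nonneg _), Real.sqrt_sq (by linarith)]

lemma round_err {n : ℕ} {s : ℝ} (hs : 0 < s) (p : EuclideanSpace ℝ (Fin n)) :
    ‖p - grid n s (fun i => round (p i / (2 * s)))‖ ≤ s * Real.sqrt n := by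
  refine norm_le_of_coords _ hs.le fun i => ?_
  have hcoord : (p - grid n s (fun i => round (p i / (2 * s)))) i
      = p i - 2 * s * ((round (p i / (2 * s)) : ℤ) : ℝ) := rfl
  rw [hcoord]
  have h2s : (0 : ℝ) < 2 * s := by linarith
  have key : p i - 2 * s * ((round (p i / (2 * s)) : ℤ) : ℝ)
      = (2 * s) * (p i / (2 * s) - ((round (p i / (2 * s)) : ℤ) : ℝ)) := by
    field_simp
  rw [key, abs_mul, abs_of_pos h2s]
  have := abs_sub_round (p i / (2 * s))
  nlinarith [abs_nonneg (p i / (2 * s) - ((round (p i / (2 * s)) : ℤ) : ℝ))]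

lemma key_ineq {n : ℕ} (hn : 1 ≤ n) {s : ℝ} (hs : 0 < s) (p : EuclideanSpace ℝ (Fin n))
    (z : Fin n → ℤ) (hp : 2 * Real.sqrt n * s ≤ ‖p‖)
    (hznear : ‖p - grid n s z‖ ≤ s * Real.sqrt n) :
    Real.exp (-Real.pi * (‖p‖ / s) ^ 2)
      ≤ Real.exp (-Real.pi * (16 / 5) * n)
        * ∏ i, Real.exp (-(Real.pi / 4)) ^ (z i).natAbs := by
  have hπ := Real.pi_pos
  set a := Real.sqrt n with ha
  have ha0 : 0 ≤ a := Real.sqrt_nonneg _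
  have ha2 : a ^ 2 = n := Real.sq_sqrt (Nat.cast_nonneg n)
  have ha1 : 1 ≤ a := by
    rw [ha, show (1 : ℝ) = Real.sqrt 1 from Real.sqrt_one.symm]
    exact Real.sqrt_le_sqrt (by exact_mod_cast hn)
  set t := Real.sqrt (∑ i, ((z i : ℝ)) ^ 2) with ht
  have ht0 : 0 ≤ t := Real.sqrt_nonneg _
  have ht2 : t ^ 2 = ∑ i, ((z i : ℝ)) ^ 2 :=
    Real.sq_sqrt (Finset.sum_nonneg fun i _ => sq_nonneg _)
  set M := ∑ i, |((z i : ℝ))| with hM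
  have hM0 : 0 ≤ M := Finset.sum_nonneg fun i _ => abs_nonneg _
  -- Cauchy-Schwarz : M ≤ a * t
  have hMt : M ≤ a * t := by
    have hcs := Finset.sum_mul_sq_le_sq_mul_sq Finset.univ (fun i => |(z i : ℝ)|)
      (fun _ => (1 : ℝ))
    have e1 : ∑ i, |(z i : ℝ)| * 1 = M := by simp [hM]
    have e2 : ∑ i, |(z i : ℝ)| ^ 2 = t ^ 2 := by
      rw [ht2]; exact Finset.sum_congr rfl fun i _ => sq_abs _
    have e3 : ∑ _i : Fin n, (1 : ℝ) ^ 2 = (n : ℝ) := by simp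
    rw [e1, e2, e3] at hcs
    nlinarith [hcs, mul_nonneg ha0 ht0]
  -- norm lower bounds
  set w := ‖p‖ / s with hw
  have hw0 : 0 ≤ w := div_nonneg (norm_nonneg _) hs.le
  have hw1 : 2 * a ≤ w := by rw [hw, le_div_iff₀ hs]; linarith
  have hw2 : 2 * t - a ≤ w := by
    have hg : ‖grid n s z‖ = 2 * s * t := norm_grid hs z
    have h3 : ‖grid n s z‖ - ‖grid n s z - p‖ ≤ ‖p‖ := by
      have := norm_sub_norm_le (grid n s z) p
      linarith
    have h4 : ‖grid n s z - p‖ = ‖p - grid n s z‖ := norm_sub_rev _ _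
    have h5 : 2 * s * t - s * a ≤ ‖p‖ := by rw [hg] at h3; linarith
    rw [hw, le_div_iff₀ hs]
    nlinarith
  -- the real inequality
  have hkey : (16 / 5) * (n : ℝ) + M / 4 ≤ w ^ 2 := by
    rw [← ha2]
    rcases le_or_gt t (3 / 2 * a) with hcase | hcase
    · have hMa : M ≤ a * (3 / 2 * a) := le_trans hMt (by nlinarith)
      have hsq : (2 * a) ^ 2 ≤ w ^ 2 := by nlinarith [mul_nonneg (sub_nonneg.2 hw1) (by linarith : (0:ℝ) ≤ w + 2 * a)]
      nlinarith
    · have h2ta : 0 ≤ 2 * t - a := by nlinarith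
      have hsq : (2 * t - a) ^ 2 ≤ w ^ 2 := by
        nlinarith [mul_nonneg (sub_nonneg.2 hw2) (by linarith : (0:ℝ) ≤ w + (2 * t - a))]
      nlinarith [mul_nonneg ha0 (by linarith : (0:ℝ) ≤ t - 3 / 2 * a), sq_nonneg (t - 3 / 2 * a)]
  -- convert to exp form
  have hprod : ∏ i, Real.exp (-(Real.pi / 4)) ^ (z i).natAbs
      = Real.exp (∑ i, ((z i).natAbs : ℝ) * (-(Real.pi / 4))) := by
    rw [Real.exp_sum]
    exact Finset.prod_congr rfl fun i _ => by rw [← Real.exp_nat_mul]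
  have hMsum : ∑ i, ((z i).natAbs : ℝ) = M := by
    rw [hM]
    exact Finset.sum_congr rfl fun i _ => by
      rw [Nat.cast_natAbs, Int.cast_abs]
  rw [hprod, ← Real.exp_add, Real.exp_le_exp]
  have hsum2 : ∑ i, ((z i).natAbs : ℝ) * (-(Real.pi / 4)) = -(Real.pi / 4) * M := by
    rw [← Finset.sum_mul, hMsum]; ring
  rw [hsum2]
  have := mul_le_mul_of_nonneg_left hkey hπ.le
  nlinarith

lemma numeric_bound (n : ℕ) :
    Real.exp (-Real.pi * (16 / 5) * n)
      * ((1 - Real.exp (-(Real.pi / 4)))⁻¹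
          + Real.exp (-(Real.pi / 4)) * (1 - Real.exp (-(Real.pi / 4)))⁻¹) ^ n
      ≤ ((2 : ℝ) ^ (11 * n))⁻¹ := by
  have hπ := Real.pi_pos
  set r := Real.exp (-(Real.pi / 4)) with hr
  have hr0 : 0 < r := Real.exp_pos _
  have hrhalf : r < 1 / 2 := by
    have hlog : Real.log 2 < 0.6931471808 := Real.log_two_lt_d9
    have hpi : 3.141592 < Real.pi := Real.pi_gt_d6
    have h1 : -(Real.pi / 4) < -Real.log 2 := by linarith
    calc r < Real.exp (-Real.log 2) := Real.exp_lt_exp.2 h1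
      _ = 1 / 2 := by rw [Real.exp_neg, Real.exp_log two_pos]; norm_num
  set T := (1 - r)⁻¹ + r * (1 - r)⁻¹ with hT
  have hinv2 : (1 - r)⁻¹ ≤ 2 := by
    have h2 : (2 : ℝ)⁻¹ ≤ 1 - r := by linarith
    calc (1 - r)⁻¹ ≤ ((2 : ℝ)⁻¹)⁻¹ := by gcongr <;> norm_num
      _ = 2 := by norm_num
  have hinvpos : 0 < (1 - r)⁻¹ := inv_pos.2 (by linarith)
  have haux : 0 ≤ (1 / 2 - r) * (1 - r)⁻¹ := mul_nonneg (by linarith) hinvpos.le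
  have hrx : r * (1 - r)⁻¹ ≤ 1 := by nlinarith
  have hT3 : T ≤ 3 := by rw [hT]; linarith
  have hT0 : 0 ≤ T := by positivity
  have hbig : (6144 : ℝ) ≤ Real.exp (Real.pi * (16 / 5)) := by
    have h10 : (10 : ℝ) ≤ Real.pi * (16 / 5) := by nlinarith [Real.pi_gt_d6]
    have he : (2.7 : ℝ) ≤ Real.exp 1 := by linarith [Real.exp_one_gt_d9]
    calc (6144 : ℝ) ≤ 2.7 ^ (10 : ℕ) := by norm_num
      _ ≤ Real.exp 1 ^ (10 : ℕ) := pow_le_pow_left₀ (by norm_num) he 10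
      _ = Real.exp 10 := by rw [← Real.exp_nat_mul]; norm_num
      _ ≤ Real.exp (Real.pi * (16 / 5)) := Real.exp_le_exp.2 h10
  have hbase : Real.exp (-(Real.pi * (16 / 5))) * T ≤ ((2 : ℝ) ^ 11)⁻¹ := by
    have hu : Real.exp (-(Real.pi * (16 / 5))) ≤ (6144 : ℝ)⁻¹ := by
      rw [Real.exp_neg]
      exact inv_anti₀ (by norm_num) hbig
    calc Real.exp (-(Real.pi * (16 / 5))) * T ≤ (6144 : ℝ)⁻¹ * 3 :=
          mul_le_mul hu hT3 hT0 (by norm_num)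
      _ ≤ ((2 : ℝ) ^ 11)⁻¹ := by norm_num
  have hexp : Real.exp (-Real.pi * (16 / 5) * n) = Real.exp (-(Real.pi * (16 / 5))) ^ n := by
    rw [← Real.exp_nat_mul]
    congr 1
    ring
  calc Real.exp (-Real.pi * (16 / 5) * n) * T ^ n
      = (Real.exp (-(Real.pi * (16 / 5))) * T) ^ n := by rw [hexp, mul_pow]
    _ ≤ (((2 : ℝ) ^ 11)⁻¹) ^ n := pow_le_pow_left₀ (by positivity) hbase n
    _ = ((2 : ℝ) ^ (11 * n))⁻¹ := by rw [inv_pow, ← pow_mul]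

lemma tail_bound {n : ℕ} (hn : 1 ≤ n) {s : ℝ} (hs : 0 < s)
    (P : Set (EuclideanSpace ℝ (Fin n))) (p₀ : EuclideanSpace ℝ (Fin n)) (hp₀ : p₀ ∈ P)
    (hsep : ∀ p ∈ P, ∀ q ∈ P, p ≠ q → 4 * Real.sqrt n * s ≤ ‖p - q‖)
    (hfar : ∀ p ∈ P, p ≠ p₀ → 2 * Real.sqrt n * s ≤ ‖p‖) :
    Summable (fun p : P => Real.exp (-Real.pi * (‖(p : EuclideanSpace ℝ (Fin n))‖ / s) ^ 2)) ∧
      ∑' p : P, Real.exp (-Real.pi * (‖(p : EuclideanSpace ℝ (Fin n))‖ / s) ^ 2)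
        ≤ Real.exp (-Real.pi * (‖p₀‖ / s) ^ 2) + ((2 : ℝ) ^ (11 * n))⁻¹ := by
  have ha0 : 0 < Real.sqrt n := Real.sqrt_pos.2 (by exact_mod_cast hn)
  set r := Real.exp (-(Real.pi / 4)) with hrdef
  have hr0 : 0 ≤ r := (Real.exp_pos _).le
  have hr1 : r < 1 := Real.exp_lt_one_iff.2 (by linarith [Real.pi_pos])
  set T := (1 - r)⁻¹ + r * (1 - r)⁻¹ with hT
  have hGsum : HasSum (fun z : Fin n → ℤ => ∏ i, r ^ (z i).natAbs) (T ^ n) :=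
    hasSum_pi_prod (fun k => pow_nonneg hr0 _) (hasSum_int_pow_natAbs hr0 hr1) n
  have hG0 : ∀ z : Fin n → ℤ, 0 ≤ ∏ i, r ^ (z i).natAbs :=
    fun z => Finset.prod_nonneg fun i _ => pow_nonneg hr0 _
  set C := Real.exp (-Real.pi * (16 / 5) * n) with hC
  have hC0 : 0 ≤ C := (Real.exp_pos _).le
  -- the rounding map
  set φ : P → (Fin n → ℤ) := fun p => fun i => round ((p : EuclideanSpace ℝ (Fin n)) i / (2 * s))
    with hφ
  have hφnear : ∀ p : P, ‖(p : EuclideanSpace ℝ (Fin n)) - grid n s (φ p)‖ ≤ s * Real.sqrt n :=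
    fun p => round_err hs _
  have hinj : Function.Injective φ := by
    intro p q hpq
    by_contra hne
    have hvals : (p : EuclideanSpace ℝ (Fin n)) ≠ (q : EuclideanSpace ℝ (Fin n)) :=
      fun h => hne (Subtype.ext h)
    have h1 := hsep _ p.2 _ q.2 hvals
    have h2 : ‖(p : EuclideanSpace ℝ (Fin n)) - (q : EuclideanSpace ℝ (Fin n))‖
        ≤ 2 * (s * Real.sqrt n) := by
      have hdec : (p : EuclideanSpace ℝ (Fin n)) - (q : EuclideanSpace ℝ (Fin n))
          = ((p : EuclideanSpace ℝ (Fin n)) - grid n s (φ p))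
            - ((q : EuclideanSpace ℝ (Fin n)) - grid n s (φ q)) := by
        rw [hpq]; abel
      rw [hdec]
      calc ‖_ - _‖ ≤ ‖(p : EuclideanSpace ℝ (Fin n)) - grid n s (φ p)‖
            + ‖(q : EuclideanSpace ℝ (Fin n)) - grid n s (φ q)‖ := norm_sub_le _ _
        _ ≤ 2 * (s * Real.sqrt n) := by linarith [hφnear p, hφnear q]
    nlinarith [mul_pos hs ha0]
  -- the dominating function
  set g : (Fin n → ℤ) → ℝ := fun w =>
    (if w = φ ⟨p₀, hp₀⟩ then Real.exp (-Real.pi * (‖p₀‖ / s) ^ 2) else 0)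
      + C * ∏ i, r ^ (w i).natAbs with hg
  have hg0 : ∀ w, 0 ≤ g w := by
    intro w
    have : (0:ℝ) ≤ (if w = φ ⟨p₀, hp₀⟩ then Real.exp (-Real.pi * (‖p₀‖ / s) ^ 2) else 0) := by
      split <;> positivity
    have := mul_nonneg hC0 (hG0 w)
    rw [hg]; dsimp only; positivity
  have hgsum : HasSum g (Real.exp (-Real.pi * (‖p₀‖ / s) ^ 2) + C * T ^ n) :=
    (hasSum_ite_eq _ _).add (hGsum.mul_left C)
  -- pointwise bound
  have hpt : ∀ p : P, Real.exp (-Real.pi * (‖(p : EuclideanSpace ℝ (Fin n))‖ / s) ^ 2)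
      ≤ g (φ p) := by
    intro p
    by_cases hp : (p : EuclideanSpace ℝ (Fin n)) = p₀
    · have hφeq : φ p = φ ⟨p₀, hp₀⟩ := by
        funext i; simp only [hφ, hp]
      rw [hg]; dsimp only
      rw [hφeq, if_pos rfl, hp]
      have := mul_nonneg hC0 (hG0 (φ ⟨p₀, hp₀⟩))
      linarith
    · have h2 := hfar _ p.2 hp
      have hk := key_ineq hn hs (p : EuclideanSpace ℝ (Fin n)) (φ p) h2 (hφnear p)
      rw [hg]; dsimp only
      have hite : (0:ℝ) ≤ (if φ p = φ ⟨p₀, hp₀⟩ then Real.exp (-Real.pi * (‖p₀‖ / s) ^ 2)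
          else 0) := by split <;> positivity
      calc Real.exp (-Real.pi * (‖(p : EuclideanSpace ℝ (Fin n))‖ / s) ^ 2)
          ≤ C * ∏ i, r ^ ((φ p) i).natAbs := hk
        _ ≤ _ := by linarith
  have hf : Summable (fun p : P =>
      Real.exp (-Real.pi * (‖(p : EuclideanSpace ℝ (Fin n))‖ / s) ^ 2)) :=
    Summable.of_nonneg_of_le (fun p => (Real.exp_pos _).le) hpt
      (hgsum.summable.comp_injective hinj)
  refine ⟨hf, ?_⟩
  have hle := Summable.tsum_le_tsum_of_inj φ hinj (fun w _ => hg0 w) hpt hf hgsum.summable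
  rw [hgsum.tsum_eq] at hle
  have hnum := numeric_bound n
  rw [← hC, ← hT] at hnum
  linarith

/-- The length of a shortest nonzero vector of a set `A`. -/
def lambda1 {E : Type*} [NormedAddCommGroup E] (A : Set E) : ℝ :=
  sInf (norm '' (A \ {0}))

/-- The Gaussian mass `ρ_s(A) = Σ_{a ∈ A} exp(−π‖a/s‖²)` of a set `A`. -/
def gMass {E : Type*} [NormedAddCommGroup E] (s : ℝ) (A : Set E) : ℝ :=
  ∑' a : A, Real.exp (-Real.pi * (‖(a : E)‖ / s) ^ 2)

/-- If `λ₁(L) ≥ 4√n · s` then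
`1 − ρ_s(L − x)/ρ_s(L) ≥ 1 − exp(−π·dist(x, L)²/s²) − 2^{−11n}`. -/
theorem gaussian_norm_ge_of_lambda1_large
    (n : ℕ) (hn : 1 ≤ n)
    (L : Submodule ℤ (EuclideanSpace ℝ (Fin n))) [DiscreteTopology L]
    (hL : IsZLattice ℝ L) (s : ℝ) (hs : 0 < s) (x : EuclideanSpace ℝ (Fin n))
    (hlam : lambda1 (L : Set (EuclideanSpace ℝ (Fin n))) ≥ 4 * Real.sqrt n * s) :
    1 - gMass s ((fun v => v - x) '' (L : Set (EuclideanSpace ℝ (Fin n))))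
        / gMass s (L : Set (EuclideanSpace ℝ (Fin n)))
      ≥ 1 - Real.exp (-Real.pi * Metric.infDist x (L : Set (EuclideanSpace ℝ (Fin n))) ^ 2 / s ^ 2)
        - ((2 : ℝ) ^ (11 * n))⁻¹ := by
  have ha0 : 0 < Real.sqrt n := Real.sqrt_pos.2 (by exact_mod_cast hn)
  set S : Set (EuclideanSpace ℝ (Fin n)) := (L : Set (EuclideanSpace ℝ (Fin n))) with hS
  have h0S : (0 : EuclideanSpace ℝ (Fin n)) ∈ S := L.zero_mem
  -- minimal distance bound
  have hmin : ∀ u ∈ S, u ≠ 0 → 4 * Real.sqrt n * s ≤ ‖u‖ := by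
    intro u hu hne
    refine le_trans hlam (csInf_le ⟨0, ?_⟩ ⟨u, ⟨hu, hne⟩, rfl⟩)
    rintro y ⟨v, -, rfl⟩
    exact norm_nonneg v
  have hsepS : ∀ p ∈ S, ∀ q ∈ S, p ≠ q → 4 * Real.sqrt n * s ≤ ‖p - q‖ :=
    fun p hp q hq hne => hmin _ (L.sub_mem hp hq) (sub_ne_zero.2 hne)
  have hfarS : ∀ p ∈ S, p ≠ 0 → 2 * Real.sqrt n * s ≤ ‖p‖ := by
    intro p hp hne
    have := hmin p hp hne
    nlinarith [mul_pos ha0 hs]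
  obtain ⟨hsumS, -⟩ := tail_bound hn hs S 0 h0S hsepS hfarS
  -- denominator at least 1
  have hB1 : (1 : ℝ) ≤ gMass s S := by
    have hterm : Real.exp (-Real.pi *
        (‖((⟨0, h0S⟩ : S) : EuclideanSpace ℝ (Fin n))‖ / s) ^ 2) = 1 := by
      simp
    calc (1 : ℝ) = Real.exp (-Real.pi *
          (‖((⟨0, h0S⟩ : S) : EuclideanSpace ℝ (Fin n))‖ / s) ^ 2) := hterm.symm
      _ ≤ ∑' p : S, Real.exp (-Real.pi * (‖(p : EuclideanSpace ℝ (Fin n))‖ / s) ^ 2) :=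
          Summable.le_tsum hsumS _ (fun b _ => (Real.exp_pos _).le)
      _ = gMass s S := rfl
  -- closedness and nearest point
  have hclosed : IsClosed S := by
    haveI : DiscreteTopology L.toAddSubgroup := ‹DiscreteTopology L›
    exact AddSubgroup.isClosed_of_discrete (H := L.toAddSubgroup)
  obtain ⟨v₀, hv₀, hdist⟩ := hclosed.exists_infDist_eq_dist ⟨0, h0S⟩ x
  set P : Set (EuclideanSpace ℝ (Fin n)) := (fun v => v - x) '' S with hP
  have hp₀P : v₀ - x ∈ P := ⟨v₀, hv₀, rfl⟩
  have hnormp₀ : ‖v₀ - x‖ = Metric.infDist x S := by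
    rw [hdist, dist_eq_norm, norm_sub_rev]
  have hd_le : ∀ p ∈ P, ‖v₀ - x‖ ≤ ‖p‖ := by
    rintro p ⟨v, hv, rfl⟩
    rw [hnormp₀]
    calc Metric.infDist x S ≤ dist x v := Metric.infDist_le_dist_of_mem hv
      _ = ‖v - x‖ := by rw [dist_eq_norm, norm_sub_rev]
  have hsepP : ∀ p ∈ P, ∀ q ∈ P, p ≠ q → 4 * Real.sqrt n * s ≤ ‖p - q‖ := by
    rintro p ⟨v, hv, rfl⟩ q ⟨w, hw, rfl⟩ hne
    have hvw : v ≠ w := by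
      intro h; exact hne (by rw [h])
    have : v - x - (w - x) = v - w := by abel
    rw [this]
    exact hmin _ (L.sub_mem hv hw) (sub_ne_zero.2 hvw)
  have hfarP : ∀ p ∈ P, p ≠ v₀ - x → 2 * Real.sqrt n * s ≤ ‖p‖ := by
    intro p hp hne
    by_contra h
    push_neg at h
    have h1 : ‖v₀ - x‖ ≤ ‖p‖ := hd_le p hp
    have h2 : ‖p - (v₀ - x)‖ ≤ ‖p‖ + ‖v₀ - x‖ := norm_sub_le _ _
    have h3 := hsepP p hp _ hp₀P hne
    linarith
  obtain ⟨hsumP, htsumP⟩ := tail_bound hn hs P (v₀ - x) hp₀P hsepP hfarP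
  have hA0 : 0 ≤ gMass s P := tsum_nonneg fun p => (Real.exp_pos _).le
  have hAle : gMass s P ≤ Real.exp (-Real.pi * (‖v₀ - x‖ / s) ^ 2) + ((2 : ℝ) ^ (11 * n))⁻¹ :=
    htsumP
  have hdiv : gMass s P / gMass s S ≤ gMass s P := div_le_self hA0 hB1
  have hexp_eq : Real.exp (-Real.pi * (‖v₀ - x‖ / s) ^ 2)
      = Real.exp (-Real.pi * Metric.infDist x S ^ 2 / s ^ 2) := by
    rw [hnormp₀, div_pow, mul_div_assoc]
  rw [hexp_eq] at hAle
  linarith
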